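/- arXiv:1211.6310 — 2 statements merged into one kernel-verified Lean document; each statement's English description precedes it below -/
import Mathlib

section
/- Let G be a group and A, B two G-graded PI-algebras with T_G(A) = T_G(B). Then for any positive integers d_1,…,d_m, T_G(UT(d_1,…,d_m;A)) = T_G(UT(d_1,…,d_m;B)); in particular T_G(M_n(A)) = T_G(M_n(B)) for every n. -/
noncomputable section

/-- The set of `G`-graded polynomial identities of a `G`-graded algebra `A`. -/
def gradedIdentities (F : Type*) [Field F] (G : Type*) [Group G]
    {A : Type*} [Ring A] [Algebra F A] (𝒜 : G → Submodule F A) :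
    Set (FreeAlgebra F (ℕ × G)) :=
  {f | ∀ φ : FreeAlgebra F (ℕ × G) →ₐ[F] A,
    (∀ p : ℕ × G, φ (FreeAlgebra.ι F p) ∈ 𝒜 p.2) → φ f = 0}

/-- `blockOf d i` is the index of the block containing the row/column index `i`. -/
def blockOf (d : ℕ → ℕ) (i : ℕ) : ℕ :=
  sInf {t | i < ∑ s ∈ Finset.range (t + 1), d s}

/-- The block function associated with the block sizes `d : Fin m → ℕ`. -/
def blk {m : ℕ} (d : Fin m → ℕ) (i : ℕ) : ℕ :=
  blockOf (fun s => if h : s < m then d ⟨s, h⟩ else 0) i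

/-- The set of `G`-graded polynomial identities of `UT(d₁,…,dₘ; A)`, the algebra of
block upper-triangular matrices over `A`, graded entrywise. -/
def gradedIdentitiesUT (F : Type*) [Field F] (G : Type*) [Group G]
    {A : Type*} [Ring A] [Algebra F A] (𝒜 : G → Submodule F A)
    {m : ℕ} (d : Fin m → ℕ) : Set (FreeAlgebra F (ℕ × G)) :=
  {f | ∀ φ : FreeAlgebra F (ℕ × G) →ₐ[F] Matrix (Fin (∑ t, d t)) (Fin (∑ t, d t)) A,
    (∀ p : ℕ × G, (∀ i j, φ (FreeAlgebra.ι F p) i j ∈ 𝒜 p.2) ∧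
      ∀ i j : Fin (∑ t, d t), blk d (j : ℕ) < blk d (i : ℕ) →
        φ (FreeAlgebra.ι F p) i j = 0) → φ f = 0}

/-! The generic block upper-triangular matrix of degree `g` and index `k` has the variable
`(Nat.pair k (Nat.pair i j), g)` as its `(i, j)` entry on and above the block diagonal. A graded
evaluation `φ` into `UT(d; A)` is recovered from the generic one by the graded evaluation into `A`
that sends this variable to `φ(x_{k,g}) i j`. Hence `f` is an identity of `UT(d; A)` iff every
entry of `f` evaluated at generic matrices is a graded identity of `A`, so `T_G(UT(d; A))` is
determined by `T_G(A)`. -/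

namespace GradedUT

variable (F : Type*) [Field F] (G : Type*) {m : ℕ} (d : Fin m → ℕ)

def genericMatrix (p : ℕ × G) :
    Matrix (Fin (∑ t, d t)) (Fin (∑ t, d t)) (FreeAlgebra F (ℕ × G)) :=
  fun i j => if blk d (j : ℕ) < blk d (i : ℕ) then 0
    else FreeAlgebra.ι F (Nat.pair p.1 (Nat.pair i j), p.2)

def genericEval :
    FreeAlgebra F (ℕ × G) →ₐ[F]
      Matrix (Fin (∑ t, d t)) (Fin (∑ t, d t)) (FreeAlgebra F (ℕ × G)) :=
  FreeAlgebra.lift F (genericMatrix F G d)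

variable {F G} {A : Type*} [Ring A] [Algebra F A] (𝒜 : G → Submodule F A)

def IsGradedEval (ψ : FreeAlgebra F (ℕ × G) →ₐ[F] A) : Prop :=
  ∀ p : ℕ × G, ψ (FreeAlgebra.ι F p) ∈ 𝒜 p.2

def IsGradedUTEval (φ : FreeAlgebra F (ℕ × G) →ₐ[F] Matrix (Fin (∑ t, d t)) (Fin (∑ t, d t)) A) :
    Prop :=
  ∀ p : ℕ × G, (∀ i j, φ (FreeAlgebra.ι F p) i j ∈ 𝒜 p.2) ∧
    ∀ i j : Fin (∑ t, d t), blk d (j : ℕ) < blk d (i : ℕ) → φ (FreeAlgebra.ι F p) i j = 0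

variable {d 𝒜}

theorem mapMatrix_comp_genericEval_ι (ψ : FreeAlgebra F (ℕ × G) →ₐ[F] A) (p : ℕ × G)
    (i j : Fin (∑ t, d t)) :
    (ψ.mapMatrix.comp (genericEval F G d)) (FreeAlgebra.ι F p) i j =
      if blk d (j : ℕ) < blk d (i : ℕ) then 0
      else ψ (FreeAlgebra.ι F (Nat.pair p.1 (Nat.pair i j), p.2)) := by
  simp only [AlgHom.comp_apply, genericEval, FreeAlgebra.lift_ι_apply, AlgHom.mapMatrix_apply,
    Matrix.map_apply, genericMatrix]
  split_ifs <;> simp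

theorem IsGradedEval.isGradedUTEval_mapMatrix_comp {ψ : FreeAlgebra F (ℕ × G) →ₐ[F] A}
    (hψ : IsGradedEval 𝒜 ψ) : IsGradedUTEval d 𝒜 (ψ.mapMatrix.comp (genericEval F G d)) := by
  intro p
  refine ⟨fun i j => ?_, fun i j hij => ?_⟩ <;> rw [mapMatrix_comp_genericEval_ι]
  · split_ifs
    exacts [Submodule.zero_mem _, hψ (Nat.pair p.1 (Nat.pair i j), p.2)]
  · exact if_pos hij

def entryEval (φ : FreeAlgebra F (ℕ × G) →ₐ[F] Matrix (Fin (∑ t, d t)) (Fin (∑ t, d t)) A) :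
    FreeAlgebra F (ℕ × G) →ₐ[F] A :=
  FreeAlgebra.lift F fun q =>
    if hij : (Nat.unpair (Nat.unpair q.1).2).1 < ∑ t, d t ∧
        (Nat.unpair (Nat.unpair q.1).2).2 < ∑ t, d t then
      φ (FreeAlgebra.ι F ((Nat.unpair q.1).1, q.2)) ⟨_, hij.1⟩ ⟨_, hij.2⟩
    else 0

theorem entryEval_ι_pair
    (φ : FreeAlgebra F (ℕ × G) →ₐ[F] Matrix (Fin (∑ t, d t)) (Fin (∑ t, d t)) A)
    (p : ℕ × G) (i j : Fin (∑ t, d t)) :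
    entryEval φ (FreeAlgebra.ι F (Nat.pair p.1 (Nat.pair i j), p.2)) =
      φ (FreeAlgebra.ι F p) i j := by
  simp [entryEval, Nat.unpair_pair]

theorem IsGradedUTEval.isGradedEval_entryEval
    {φ : FreeAlgebra F (ℕ × G) →ₐ[F] Matrix (Fin (∑ t, d t)) (Fin (∑ t, d t)) A}
    (hφ : IsGradedUTEval d 𝒜 φ) : IsGradedEval 𝒜 (entryEval φ) := by
  intro q
  rw [entryEval, FreeAlgebra.lift_ι_apply]
  split_ifs
  exacts [(hφ ((Nat.unpair q.1).1, q.2)).1 _ _, Submodule.zero_mem _]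

theorem IsGradedUTEval.mapMatrix_entryEval_comp_genericEval
    {φ : FreeAlgebra F (ℕ × G) →ₐ[F] Matrix (Fin (∑ t, d t)) (Fin (∑ t, d t)) A}
    (hφ : IsGradedUTEval d 𝒜 φ) : (entryEval φ).mapMatrix.comp (genericEval F G d) = φ := by
  refine FreeAlgebra.hom_ext (funext fun p => Matrix.ext fun i j => ?_)
  simp only [Function.comp_apply]
  rw [mapMatrix_comp_genericEval_ι, entryEval_ι_pair]
  split_ifs with hij
  exacts [((hφ p).2 i j hij).symm, rfl]

theorem mem_gradedIdentitiesUT_iff_genericEval_mem [Group G] (f : FreeAlgebra F (ℕ × G)) :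
    f ∈ gradedIdentitiesUT F G 𝒜 d ↔ ∀ i j, genericEval F G d f i j ∈ gradedIdentities F G 𝒜 := by
  constructor
  · intro hf i j ψ hψ
    have := hf _ (IsGradedEval.isGradedUTEval_mapMatrix_comp (d := d) hψ)
    exact congrFun (congrFun this i) j
  · intro hf φ (hφ : IsGradedUTEval d 𝒜 φ)
    rw [← hφ.mapMatrix_entryEval_comp_genericEval]
    ext i j
    exact hf i j _ hφ.isGradedEval_entryEval

theorem gradedIdentitiesUT_congr [Group G] {B : Type*} [Ring B] [Algebra F B]
    {ℬ : G → Submodule F B}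
    (h : gradedIdentities F G 𝒜 = gradedIdentities F G ℬ) (d : Fin m → ℕ) :
    gradedIdentitiesUT F G 𝒜 d = gradedIdentitiesUT F G ℬ d := by
  ext f
  rw [mem_gradedIdentitiesUT_iff_genericEval_mem, mem_gradedIdentitiesUT_iff_genericEval_mem, h]

end GradedUT

theorem gradedIdentitiesUT_eq_of_eq_general
    (F : Type*) [Field F] (G : Type*) [Group G]
    {A B : Type*} [Ring A] [Algebra F A] [Ring B] [Algebra F B]
    (𝒜 : G → Submodule F A) (ℬ : G → Submodule F B)
    (h : gradedIdentities F G 𝒜 = gradedIdentities F G ℬ) :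
    (∀ (m : ℕ) (d : Fin m → ℕ), (∀ t, 0 < d t) →
      gradedIdentitiesUT F G 𝒜 d = gradedIdentitiesUT F G ℬ d) ∧
    ∀ n : ℕ, 0 < n →
      gradedIdentitiesUT F G 𝒜 (fun _ : Fin 1 => n) =
        gradedIdentitiesUT F G ℬ (fun _ : Fin 1 => n) :=
  ⟨fun _ d _ => GradedUT.gradedIdentitiesUT_congr h d,
    fun _ _ => GradedUT.gradedIdentitiesUT_congr h _⟩

/-- If two `G`-graded PI-algebras `A` and `B` satisfy the same graded identities, then
for any block sizes `d₁,…,dₘ` the block upper-triangular matrix algebras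
`UT(d₁,…,dₘ;A)` and `UT(d₁,…,dₘ;B)` satisfy the same graded identities; in particular
`T_G(M_n(A)) = T_G(M_n(B))` for every `n`. -/
theorem gradedIdentitiesUT_eq_of_eq
    (F : Type*) [Field F] [CharZero F] (G : Type*) [Group G]
    {A B : Type*} [Ring A] [Algebra F A] [Ring B] [Algebra F B]
    (𝒜 : G → Submodule F A) (ℬ : G → Submodule F B)
    (h𝒜one : (1 : A) ∈ 𝒜 1) (h𝒜mul : ∀ g h, ∀ a ∈ 𝒜 g, ∀ b ∈ 𝒜 h, a * b ∈ 𝒜 (g * h))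
    (hℬone : (1 : B) ∈ ℬ 1) (hℬmul : ∀ g h, ∀ a ∈ ℬ g, ∀ b ∈ ℬ h, a * b ∈ ℬ (g * h))
    (hPIA : ∃ f ∈ gradedIdentities F G 𝒜, f ≠ 0)
    (hPIB : ∃ f ∈ gradedIdentities F G ℬ, f ≠ 0)
    (h : gradedIdentities F G 𝒜 = gradedIdentities F G ℬ) :
    (∀ (m : ℕ) (d : Fin m → ℕ), (∀ t, 0 < d t) →
      gradedIdentitiesUT F G 𝒜 d = gradedIdentitiesUT F G ℬ d) ∧
    ∀ n : ℕ, 0 < n →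
      gradedIdentitiesUT F G 𝒜 (fun _ : Fin 1 => n) =
        gradedIdentitiesUT F G ℬ (fun _ : Fin 1 => n) :=
  gradedIdentitiesUT_eq_of_eq_general F G 𝒜 ℬ h
end
end

section
/- Let E carry the Z/2-grading deg(·)_{k*} (deg(e_i)=1 for i ≤ k, 0 otherwise) and let R = UT(1,1;E) be 2×2 upper-triangular matrices over E graded entrywise. Then the product of T-ideals T_{Z/2}(E)·T_{Z/2}(E) is strictly contained in T_{Z/2}(R): the monomial z_1⋯z_{k+1} lies in T_{Z/2}(R) but not in T_{Z/2}(E)·T_{Z/2}(E). -/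
noncomputable section

/-- The generator `e_i` of the infinite-dimensional Grassmann algebra. -/
def grassGen (F : Type*) [Field F] (i : ℕ) : ExteriorAlgebra F (ℕ →₀ F) :=
  ExteriorAlgebra.ι F (Finsupp.single i 1)

/-- The homogeneous component of degree `g ∈ ℤ/2` of the Grassmann algebra for the
grading `deg(·)_{k*}` (`deg(e_i) = 1` for the first `k` generators, `0` otherwise). -/
def grassCompKStar (F : Type*) [Field F] (k : ℕ) (g : ZMod 2) :
    Submodule F (ExteriorAlgebra F (ℕ →₀ F)) :=
  Submodule.span F
    {x | ∃ l : List ℕ, ((l.countP fun i => decide (i < k)) : ZMod 2) = g ∧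
      x = (l.map (grassGen F)).prod}

/-- The `ℤ/2`-graded identities of the Grassmann algebra `E` with the grading
`deg(·)_{k*}`, in the free `ℤ/2`-graded algebra on the variables indexed by
`ℕ × ZMod 2` (the variable `(n, g)` having degree `g`). -/
def TE (F : Type*) [Field F] [CharZero F] (k : ℕ) : Set (FreeAlgebra F (ℕ × ZMod 2)) :=
  {f | ∀ φ : FreeAlgebra F (ℕ × ZMod 2) →ₐ[F] ExteriorAlgebra F (ℕ →₀ F),
    (∀ p : ℕ × ZMod 2, φ (FreeAlgebra.ι F p) ∈ grassCompKStar F k p.2) → φ f = 0}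

/-- The homogeneous component of degree `g` of `R = UT(1,1;E)` (upper triangular
`2×2` matrices over `E`), graded entrywise from the grading `deg(·)_{k*}` of `E`. -/
def UT2comp (F : Type*) [Field F] (k : ℕ) (g : ZMod 2) :
    Set (Matrix (Fin 2) (Fin 2) (ExteriorAlgebra F (ℕ →₀ F))) :=
  {M | M 1 0 = 0 ∧ ∀ i j, M i j ∈ grassCompKStar F k g}

/-- The `ℤ/2`-graded identities of `R = UT(1,1;E)` with the grading induced by
`deg(·)_{k*}` on `E`. -/
def TR (F : Type*) [Field F] [CharZero F] (k : ℕ) : Set (FreeAlgebra F (ℕ × ZMod 2)) :=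
  {f | ∀ φ : FreeAlgebra F (ℕ × ZMod 2) →ₐ[F]
      Matrix (Fin 2) (Fin 2) (ExteriorAlgebra F (ℕ →₀ F)),
    (∀ p : ℕ × ZMod 2, φ (FreeAlgebra.ι F p) ∈ UT2comp F k p.2) → φ f = 0}

/-! An odd element of `E` is a combination of monomials containing at least one of
`e₁, …, e_k`, so a product of `k + 1` odd elements repeats a generator and vanishes; applied
entrywise, this makes `z₁ ⋯ z_{k+1}` an identity of `R`.

On the other hand, take any substitution into upper triangular `2 × 2` matrices over `E` whose
diagonal entries (but not necessarily the corner entry) are graded. Each diagonal entry is then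
a graded substitution into `E`, so an identity of `E` becomes strictly upper triangular and a
product of two of them vanishes. The substitution `z₁ ↦ E₁₂`, `z_{i+1} ↦ diag(0, e_i)` is
of this kind and sends `z₁ ⋯ z_{k+1}` to `e₁ ⋯ e_k E₁₂ ≠ 0`. -/

theorem ExteriorAlgebra.ιMulti_basis_comp_ne_zero {R M I : Type*} [CommRing R] [Nontrivial R]
    [AddCommGroup M] [Module R M] [LinearOrder I] (b : Module.Basis I R M) {n : ℕ}
    (f : Fin n ↪o I) : ιMulti R n (b ∘ f) ≠ 0 := by
  have := b.ExteriorAlgebra.ne_zero (Set.powersetCard.ofFinEmbEquiv f)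
  rwa [basis_apply_powersetCard, ιMulti_family, Equiv.symm_apply_apply] at this

theorem Matrix.list_prod_apply_mem_pow {R A n : Type*} [CommSemiring R] [Semiring A]
    [Algebra R A] [Fintype n] [DecidableEq n] (P : Submodule R A) {L : List (Matrix n n A)}
    (hL : ∀ M ∈ L, ∀ i j, M i j ∈ P) (i j : n) : L.prod i j ∈ P ^ L.length := by
  induction L generalizing i j with
  | nil =>
    rw [List.prod_nil, List.length_nil, pow_zero, Matrix.one_apply]
    split_ifs
    · exact Submodule.one_le.mp le_rfl
    · exact zero_mem _
  | cons M L ih =>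
    rw [List.prod_cons, List.length_cons, pow_succ', Matrix.mul_apply]
    exact Submodule.sum_mem _ fun l _ => Submodule.mul_mem_mul
      (hL M List.mem_cons_self i l) (ih (fun N hN => hL N (List.mem_cons_of_mem M hN)) l j)

theorem Matrix.IsUpperTriangular.mul_apply_self {m A : Type*} [LinearOrder m] [Fintype m]
    [NonUnitalNonAssocSemiring A] {M N : Matrix m m A} (hM : M.IsUpperTriangular)
    (hN : N.IsUpperTriangular) (i : m) : (M * N) i i = M i i * N i i := by
  rw [Matrix.mul_apply]
  refine Finset.sum_eq_single i (fun l _ hli => ?_) (by simp)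
  rcases hli.lt_or_gt with h | h
  · rw [hM h, zero_mul]
  · rw [hN h, mul_zero]

def Matrix.upperTriangularDiagAlgHom (R A : Type*) {m : Type*} [CommSemiring R] [Semiring A]
    [Algebra R A] [LinearOrder m] [Fintype m] (i : m) :
    Matrix.blockTriangularSubalgebra R A (id : m → m) →ₐ[R] A where
  toFun M := (M : Matrix m m A) i i
  map_one' := Matrix.one_apply_eq i
  map_mul' M N := Matrix.IsUpperTriangular.mul_apply_self M.2 N.2 i
  map_zero' := rfl
  map_add' _ _ := rfl
  commutes' r := by simp [Matrix.algebraMap_matrix_apply]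

theorem FreeAlgebra.apply_mem_of_ι_mem {R X A : Type*} [CommSemiring R] [Semiring A]
    [Algebra R A] {S : Subalgebra R A} (φ : FreeAlgebra R X →ₐ[R] A)
    (h : ∀ x, φ (FreeAlgebra.ι R x) ∈ S) (f : FreeAlgebra R X) : φ f ∈ S := by
  induction f using FreeAlgebra.induction with
  | grade0 r => simp [S.algebraMap_mem r]
  | grade1 x => exact h x
  | mul f g hf hg => simpa using S.mul_mem hf hg
  | add f g hf hg => simpa using S.add_mem hf hg

theorem Matrix.isUpperTriangular_fin_two_iff {A : Type*} [Zero A]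
    {M : Matrix (Fin 2) (Fin 2) A} : M.IsUpperTriangular ↔ M 1 0 = 0 := by
  refine ⟨fun h => h (by decide), fun h i j hij => ?_⟩
  fin_cases i <;> fin_cases j <;> simp_all

theorem Matrix.fin_two_mul_eq_zero_of_diag_eq_zero {A : Type*} [NonUnitalNonAssocSemiring A]
    {M N : Matrix (Fin 2) (Fin 2) A} (hM : M.IsUpperTriangular) (hN : N.IsUpperTriangular)
    (hM' : M.diag = 0) (hN' : N.diag = 0) :
    M * N = 0 := by
  rw [isUpperTriangular_fin_two_iff] at hM hN
  have hM0 : M 0 0 = 0 := congrFun hM' 0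
  have hM1 : M 1 1 = 0 := congrFun hM' 1
  have hN0 : N 0 0 = 0 := congrFun hN' 0
  have hN1 : N 1 1 = 0 := congrFun hN' 1
  ext i j
  fin_cases i <;> fin_cases j <;> simp [Matrix.mul_apply, *]

theorem List.not_nodup_of_lt_countP_lt {k : ℕ} {l : List ℕ}
    (h : k < l.countP fun i => decide (i < k)) : ¬ l.Nodup := by
  intro hl
  have hsub : (l.filter fun i => decide (i < k)).toFinset ⊆ Finset.range k := by
    intro x hx
    simp only [List.mem_toFinset, List.mem_filter, decide_eq_true_eq] at hx
    exact Finset.mem_range.mpr hx.2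
  have := Finset.card_le_card hsub
  rw [List.toFinset_card_of_nodup (hl.filter _), Finset.card_range,
    ← List.countP_eq_length_filter] at this
  omega

section Grassmann

variable (F : Type*) [Field F] (k : ℕ)

theorem grassGen_list_prod_eq_ιMulti (l : List ℕ) :
    (l.map (grassGen F)).prod
      = ExteriorAlgebra.ιMulti F l.length (fun i => Finsupp.single (l.get i) (1 : F)) := by
  rw [ExteriorAlgebra.ιMulti_apply]
  conv_lhs => rw [← List.ofFn_get l, List.map_ofFn]
  rfl

theorem grassGen_list_prod_eq_zero_of_not_nodup {l : List ℕ} (hl : ¬ l.Nodup) :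
    (l.map (grassGen F)).prod = 0 := by
  rw [grassGen_list_prod_eq_ιMulti]
  refine AlternatingMap.map_eq_zero_of_not_injective _ _ fun hinj => hl ?_
  exact List.nodup_iff_injective_get.mpr fun i j hij => hinj (by simp only [hij])

theorem grassGen_ofFn_prod_ne_zero :
    (List.ofFn fun i : Fin k => grassGen F i).prod ≠ 0 := by
  simpa [ExteriorAlgebra.ιMulti_apply, grassGen] using
    ExteriorAlgebra.ιMulti_basis_comp_ne_zero (Finsupp.basisSingleOne (R := F)) (Fin.valOrderEmb k)

theorem grassGen_mem_grassCompKStar_one {n : ℕ} (hn : n < k) :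
    grassGen F n ∈ grassCompKStar F k 1 :=
  Submodule.subset_span ⟨[n], by simp [hn], by simp⟩

def grassFiltration (c : ℕ) : Submodule F (ExteriorAlgebra F (ℕ →₀ F)) :=
  Submodule.span F {x | ∃ l : List ℕ, c ≤ l.countP (fun i => decide (i < k)) ∧
    x = (l.map (grassGen F)).prod}

theorem grassCompKStar_one_le_grassFiltration :
    grassCompKStar F k 1 ≤ grassFiltration F k 1 := by
  refine Submodule.span_mono ?_
  rintro x ⟨l, hl, rfl⟩
  refine ⟨l, Nat.one_le_iff_ne_zero.mpr fun h0 => ?_, rfl⟩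
  simp [h0] at hl

theorem grassFiltration_mul_le (a b : ℕ) :
    grassFiltration F k a * grassFiltration F k b ≤ grassFiltration F k (a + b) := by
  rw [grassFiltration, grassFiltration, Submodule.span_mul_span, Submodule.span_le]
  rintro _ ⟨_, ⟨l₁, h₁, rfl⟩, _, ⟨l₂, h₂, rfl⟩, rfl⟩
  refine Submodule.subset_span ⟨l₁ ++ l₂, ?_, by rw [List.map_append, List.prod_append]⟩
  rw [List.countP_append]
  omega

theorem grassFiltration_one_pow_le (n : ℕ) :
    grassFiltration F k 1 ^ n ≤ grassFiltration F k n := by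
  induction n with
  | zero => exact Submodule.one_le.mpr (Submodule.subset_span ⟨[], le_rfl, rfl⟩)
  | succ n ih =>
    rw [pow_succ]
    exact (mul_le_mul_left ih _).trans (grassFiltration_mul_le F k n 1)

theorem grassFiltration_eq_bot {c : ℕ} (hc : k < c) : grassFiltration F k c = ⊥ := by
  rw [grassFiltration, Submodule.span_eq_bot]
  rintro _ ⟨l, hl, rfl⟩
  exact grassGen_list_prod_eq_zero_of_not_nodup F
    (List.not_nodup_of_lt_countP_lt (k := k) (by omega))

theorem grassCompKStar_one_pow_eq_bot {n : ℕ} (hn : k < n) : grassCompKStar F k 1 ^ n = ⊥ :=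
  eq_bot_iff.mpr <| (pow_le_pow_left' (grassCompKStar_one_le_grassFiltration F k) n).trans <|
    (grassFiltration_one_pow_le F k n).trans (grassFiltration_eq_bot F k hn).le

end Grassmann

section Identities

variable {F : Type*} [Field F] [CharZero F] {k : ℕ}

open Matrix in
theorem diag_eq_zero_of_mem_TE {m : Type*} [LinearOrder m] [Fintype m]
    {φ : FreeAlgebra F (ℕ × ZMod 2) →ₐ[F] Matrix m m (ExteriorAlgebra F (ℕ →₀ F))}
    (hupper : ∀ p, (φ (FreeAlgebra.ι F p)).IsUpperTriangular)
    (hdiag : ∀ p i, φ (FreeAlgebra.ι F p) i i ∈ grassCompKStar F k p.2)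
    {f : FreeAlgebra F (ℕ × ZMod 2)} (hf : f ∈ TE F k) : (φ f).diag = 0 := by
  let φ' := φ.codRestrict (blockTriangularSubalgebra F _ id)
    (FreeAlgebra.apply_mem_of_ι_mem φ hupper)
  funext i
  exact hf ((upperTriangularDiagAlgHom F _ i).comp φ') fun p => hdiag p i

theorem span_TE_mul_TE_le_ker
    {φ : FreeAlgebra F (ℕ × ZMod 2) →ₐ[F]
      Matrix (Fin 2) (Fin 2) (ExteriorAlgebra F (ℕ →₀ F))}
    (hupper : ∀ p, (φ (FreeAlgebra.ι F p)).IsUpperTriangular)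
    (hdiag : ∀ p i, φ (FreeAlgebra.ι F p) i i ∈ grassCompKStar F k p.2) :
    Submodule.span F {y | ∃ f ∈ TE F k, ∃ g ∈ TE F k, y = f * g} ≤
      LinearMap.ker φ.toLinearMap := by
  rw [Submodule.span_le]
  rintro _ ⟨f, hf, g, hg, rfl⟩
  have hφ : ∀ x, (φ x).IsUpperTriangular := FreeAlgebra.apply_mem_of_ι_mem
    (S := Matrix.blockTriangularSubalgebra F _ id) φ hupper
  exact (map_mul φ f g).trans <| Matrix.fin_two_mul_eq_zero_of_diag_eq_zero (hφ f) (hφ g)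
    (diag_eq_zero_of_mem_TE hupper hdiag hf) (diag_eq_zero_of_mem_TE hupper hdiag hg)

theorem span_TE_mul_TE_subset_TR (F : Type*) [Field F] [CharZero F] (k : ℕ) :
    (Submodule.span F {y | ∃ f ∈ TE F k, ∃ g ∈ TE F k, y = f * g} : Set _) ⊆ TR F k :=
  fun _ hx _ hφ => span_TE_mul_TE_le_ker
    (fun p => Matrix.isUpperTriangular_fin_two_iff.mpr (hφ p).1) (fun p i => (hφ p).2 i i) hx

theorem ofFn_prod_ι_odd_mem_TR {n : ℕ} (hn : k < n) (v : Fin n → ℕ) :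
    (List.ofFn fun t => FreeAlgebra.ι F (v t, (1 : ZMod 2))).prod ∈ TR F k := by
  intro φ hφ
  ext i j
  have hentry := Matrix.list_prod_apply_mem_pow (grassCompKStar F k 1)
    (L := List.ofFn fun t => φ (FreeAlgebra.ι F (v t, 1)))
    (by simpa [List.mem_ofFn] using fun t => (hφ (v t, 1)).2) i j
  rw [List.length_ofFn, grassCompKStar_one_pow_eq_bot F k hn, Submodule.mem_bot] at hentry
  rwa [map_list_prod, List.map_ofFn]

end Identities

section Witness

variable (F : Type*) [Field F] (k : ℕ)

def witnessMatrix : ℕ → Matrix (Fin 2) (Fin 2) (ExteriorAlgebra F (ℕ →₀ F))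
  | 0 => Matrix.single 0 1 1
  | n + 1 => if n < k then Matrix.diagonal ![0, grassGen F n] else 0

def witnessSubst : FreeAlgebra F (ℕ × ZMod 2) →ₐ[F]
    Matrix (Fin 2) (Fin 2) (ExteriorAlgebra F (ℕ →₀ F)) :=
  FreeAlgebra.lift F fun p => if p.2 = 1 then witnessMatrix F k p.1 else 0

theorem witnessSubst_ι_isUpperTriangular (p : ℕ × ZMod 2) :
    (witnessSubst F k (FreeAlgebra.ι F p)).IsUpperTriangular := by
  rw [witnessSubst, FreeAlgebra.lift_ι_apply, Matrix.isUpperTriangular_fin_two_iff]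
  rcases p with ⟨_ | n, g⟩ <;> simp only [witnessMatrix] <;> split_ifs <;> simp

theorem witnessSubst_ι_apply_self_mem (p : ℕ × ZMod 2) (i : Fin 2) :
    witnessSubst F k (FreeAlgebra.ι F p) i i ∈ grassCompKStar F k p.2 := by
  rw [witnessSubst, FreeAlgebra.lift_ι_apply]
  split_ifs with hp
  · rw [hp]
    rcases p with ⟨_ | n, g⟩
    · fin_cases i <;> simp [witnessMatrix]
    · simp only [witnessMatrix]
      split_ifs with hn
      · fin_cases i <;> simp [grassGen_mem_grassCompKStar_one F k hn]
      · exact zero_mem _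
  · exact zero_mem _

theorem witnessSubst_ofFn_prod_apply_zero_one :
    witnessSubst F k
        (List.ofFn fun t : Fin (k + 1) => FreeAlgebra.ι F ((t : ℕ), (1 : ZMod 2))).prod 0 1 =
      (List.ofFn fun i : Fin k => grassGen F i).prod := by
  have htail : (fun i : Fin k => witnessSubst F k (FreeAlgebra.ι F ((i.succ : ℕ), 1)))
      = Matrix.diagonalRingHom (Fin 2) _ ∘ fun i : Fin k => ![0, grassGen F i] := by
    funext i
    simp [witnessSubst, witnessMatrix]
  rw [map_list_prod, List.map_ofFn, List.ofFn_succ, List.prod_cons]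
  simp only [Function.comp_apply]
  rw [htail, ← List.map_ofFn, ← map_list_prod]
  simp [witnessSubst, witnessMatrix, Pi.list_prod_apply, List.map_ofFn, Function.comp_def]

end Witness

theorem ofFn_prod_ι_odd_notMem_span_TE_mul_TE (F : Type*) [Field F] [CharZero F] (k : ℕ) :
    (List.ofFn fun t : Fin (k + 1) => FreeAlgebra.ι F ((t : ℕ), (1 : ZMod 2))).prod ∉
      Submodule.span F {y | ∃ f ∈ TE F k, ∃ g ∈ TE F k, y = f * g} := by
  intro hmem
  have hzero := span_TE_mul_TE_le_ker (witnessSubst_ι_isUpperTriangular F k)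
    (witnessSubst_ι_apply_self_mem F k) hmem
  rw [LinearMap.mem_ker, AlgHom.toLinearMap_apply] at hzero
  apply grassGen_ofFn_prod_ne_zero F k
  rw [← witnessSubst_ofFn_prod_apply_zero_one, hzero, Matrix.zero_apply]

/-- With the grading `deg(·)_{k*}` on `E` and `R = UT(1,1;E)`, the product of T-ideals
`T_{ℤ/2}(E)·T_{ℤ/2}(E)` is strictly contained in `T_{ℤ/2}(R)`: the monomial
`z₁ ⋯ z_{k+1}` in degree-`1` variables lies in `T_{ℤ/2}(R)` but not in the product
`T_{ℤ/2}(E)·T_{ℤ/2}(E)` (the span of products of two graded identities of `E`). -/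
theorem product_TIdeal_ssubset (F : Type*) [Field F] [CharZero F] (k : ℕ) :
    ((Submodule.span F {y : FreeAlgebra F (ℕ × ZMod 2) |
        ∃ f ∈ TE F k, ∃ g ∈ TE F k, y = f * g} : Submodule F _) : Set _) ⊂ TR F k ∧
      (List.ofFn fun t : Fin (k + 1) =>
          FreeAlgebra.ι F ((t : ℕ), (1 : ZMod 2))).prod ∈ TR F k ∧
      (List.ofFn fun t : Fin (k + 1) =>
          FreeAlgebra.ι F ((t : ℕ), (1 : ZMod 2))).prod ∉
        Submodule.span F {y : FreeAlgebra F (ℕ × ZMod 2) |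
          ∃ f ∈ TE F k, ∃ g ∈ TE F k, y = f * g} := by
  have hmem := ofFn_prod_ι_odd_mem_TR (F := F) (Nat.lt_succ_self k) fun t => t
  have hnot := ofFn_prod_ι_odd_notMem_span_TE_mul_TE F k
  exact ⟨(Set.ssubset_iff_of_subset (span_TE_mul_TE_subset_TR F k)).mpr ⟨_, hmem, hnot⟩,
    hmem, hnot⟩
end
end
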